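/- arXiv:2301.07312 — 7 statements merged into one kernel-verified Lean document; each statement's English description precedes it below -/
import Mathlib

section
/- In the one-bidder commitment game with regular distribution F (virtual value φ_F(v) = v − (1−F(v))/f(v) increasing), the revenue-maximizing incentive-compatible mechanism allocates to a bidder of type v all queries with intrinsic price at most v if v ≥ r_MYE and nothing otherwise, with payment τ*(v) = r_MYE·H(r_MYE) + ∫_{r_MYE}^v z·h(z) dz for v ≥ r_MYE, where r_MYE = φ_F^{-1}(0). Equivalently, among all nondecreasing allocation functions χ with χ(v) ≤ v almost everywhere, χ*(v) = v·1{v ≥ r_MYE} maximizes E_v[φ_F(v)·H(χ(v))]. -/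
/-!
The objective is maximised pointwise: where `φ v ≥ 0`, i.e. `v ≥ rM`, the largest feasible
allocation `v` is best because `H` is monotone; where `φ v ≤ 0` it is best to allocate nothing,
since `H ≥ 0 = H 0`.
-/

open Set MeasureTheory

theorem mul_le_mul_threshold_allocation {φ H : ℝ → ℝ} {r v x : ℝ}
    (hφ : Monotone φ) (hr : φ r = 0) (hH : Monotone H) (hH0 : H 0 = 0)
    (hHnonneg : ∀ z, 0 ≤ H z) (hx : x ≤ v) :
    φ v * H x ≤ φ v * H (if r ≤ v then v else 0) := by
  by_cases hrv : r ≤ v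
  · rw [if_pos hrv]
    have hφv : 0 ≤ φ v := hr ▸ hφ hrv
    exact mul_le_mul_of_nonneg_left (hH hx) hφv
  · rw [if_neg hrv, hH0, mul_zero]
    have hφv : φ v ≤ 0 := hr ▸ hφ (le_of_not_ge hrv)
    exact mul_nonpos_of_nonpos_of_nonneg hφv (hHnonneg x)

theorem stmt3_general (μ : Measure ℝ)
    (H φ : ℝ → ℝ) (rM : ℝ)
    (hHmono : Monotone H) (hH0 : H 0 = 0) (hHnonneg : ∀ z, 0 ≤ H z)
    (hφ : StrictMono φ) (hrM : φ rM = 0)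
    (χ : ℝ → ℝ)
    (hχle : ∀ᵐ v ∂μ, χ v ≤ v)
    (hint1 : Integrable (fun v => φ v * H (χ v)) μ)
    (hint2 : Integrable (fun v => φ v * H (if rM ≤ v then v else 0)) μ) :
    ∫ v, φ v * H (χ v) ∂μ ≤ ∫ v, φ v * H (if rM ≤ v then v else 0) ∂μ :=
  integral_mono_ae hint1 hint2 <| hχle.mono fun _ hv =>
    mul_le_mul_threshold_allocation hφ.monotone hrM hHmono hH0 hHnonneg hv

theorem stmt3 (μ : Measure ℝ) [IsProbabilityMeasure μ]
    (H φ : ℝ → ℝ) (rM : ℝ)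
    (hsupp : ∀ᵐ v ∂μ, 0 ≤ v)
    (hHmono : Monotone H) (hH0 : H 0 = 0) (hHnonneg : ∀ z, 0 ≤ H z)
    (hφ : StrictMono φ) (hrM : φ rM = 0) (hrM0 : 0 ≤ rM)
    (χ : ℝ → ℝ) (hχmono : Monotone χ) (hχnonneg : ∀ v, 0 ≤ χ v)
    (hχle : ∀ᵐ v ∂μ, χ v ≤ v)
    (hint1 : Integrable (fun v => φ v * H (χ v)) μ)
    (hint2 : Integrable (fun v => φ v * H (if rM ≤ v then v else 0)) μ) :
    ∫ v, φ v * H (χ v) ∂μ ≤ ∫ v, φ v * H (if rM ≤ v then v else 0) ∂μ :=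
  stmt3_general μ H φ rM hHmono hH0 hHnonneg hφ hrM χ hχle hint1 hint2
end

section
/- Suppose H is strictly increasing with positive density h, and let b*(v) maximize (v − b)·H(b) over b (the first-price-auction shading bid), and let T*(v) satisfy H(v)·(v − T*(v)) = ∫_0^v H(z) dz (the tCPA target under zero reserve). Then for every v > 0 with b*(v) > 0, the bidder's utility satisfies (v − T*(v))·H(v) > (v − b*(v))·H(b*(v)); i.e., the tCPA format yields strictly higher utility than the mCPA format in the no-commitment game. -/
open Set intervalIntegral

/- The tCPA utility (v - T*) H(v) equals ∫₀^v H. For a bid b < v, split this integral at b: the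
piece over [b, v] exceeds (v - b) H(b) because H is strictly increasing, and the piece over [0, b]
is positive because H(0) = 0. For b ≥ v the mCPA utility (v - b) H(b) is not even positive. -/

theorem sub_mul_lt_integral_of_strictMonoOn {f : ℝ → ℝ} {a b : ℝ} (hab : a < b)
    (hf : StrictMonoOn f (Icc a b)) : (b - a) * f a < ∫ x in a..b, f x := by
  have hf_int : IntervalIntegrable f MeasureTheory.volume a b :=
    (uIcc_of_le hab.le ▸ hf.monotoneOn).intervalIntegrable
  have hgap : 0 < ∫ x in a..b, (f x - f a) :=
    intervalIntegral_pos_of_pos_on (hf_int.sub intervalIntegrable_const)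
      (fun x hx => sub_pos.2 <| hf (left_mem_Icc.2 hab.le) (Ioo_subset_Icc_self hx) hx.1) hab
  rw [integral_sub hf_int intervalIntegrable_const, integral_const, smul_eq_mul] at hgap
  linarith

theorem sub_mul_lt_integral_zero_of_strictMonoOn_Ici {H : ℝ → ℝ} {v b : ℝ}
    (hmono : StrictMonoOn H (Ici 0)) (hH0 : H 0 = 0) (hv : 0 < v) (hb : 0 < b) : (v - b) * H b < ∫ z in (0:ℝ)..v, H z := by
  have hint : ∀ c d : ℝ, 0 ≤ c → 0 ≤ d → IntervalIntegrable H MeasureTheory.volume c d :=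
    fun c d hc hd =>
      (hmono.monotoneOn.mono fun x hx => le_trans (le_min hc hd) hx.1).intervalIntegrable
  have hpos_integral : ∀ c, 0 < c → 0 < ∫ z in (0:ℝ)..c, H z := fun c hc => by
    simpa [hH0] using sub_mul_lt_integral_of_strictMonoOn hc
      (hmono.mono Icc_subset_Ici_self)
  rcases lt_or_ge b v with hbv | hvb
  · have hhigh := sub_mul_lt_integral_of_strictMonoOn hbv
      (hmono.mono (Icc_subset_Ici_iff hbv.le |>.2 hb.le))
    rw [← integral_add_adjacent_intervals (hint 0 b le_rfl hb.le) (hint b v hb.le hv.le)]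
    linarith [hpos_integral b hb]
  · have hHb : 0 < H b := hH0 ▸ hmono self_mem_Ici hb.le hb
    nlinarith [hpos_integral v hv]

theorem stmt4_general (H : ℝ → ℝ) (v bstar Tstar : ℝ)
    (hmono : StrictMonoOn H (Ici 0)) (hH0 : H 0 = 0)
    (hv : 0 < v) (hb0 : 0 < bstar)
    (hT : H v * (v - Tstar) = ∫ z in (0:ℝ)..v, H z) :
    (v - bstar) * H bstar < (v - Tstar) * H v := by
  rw [mul_comm (v - Tstar), hT]
  exact sub_mul_lt_integral_zero_of_strictMonoOn_Ici hmono hH0 hv hb0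

theorem stmt4 (H : ℝ → ℝ) (v bstar Tstar : ℝ)
    (hC1 : ContDiff ℝ 1 H) (hmono : StrictMonoOn H (Ici 0)) (hH0 : H 0 = 0)
    (hpos : ∀ z, 0 ≤ z → 0 < deriv H z)
    (hv : 0 < v) (hb0 : 0 < bstar)
    (hbmax : ∀ b, 0 ≤ b → (v - b) * H b ≤ (v - bstar) * H bstar)
    (hT : H v * (v - Tstar) = ∫ z in (0:ℝ)..v, H z) :
    (v - bstar) * H bstar < (v - Tstar) * H v :=
  stmt4_general H v bstar Tstar hmono hH0 hv hb0 hT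
end

section
/- Under the assumption that z·h(z) is nondecreasing, the function w(v) = ∫_0^v z·h(z) dz is convex, and for every v, T*(v)·H(v) ≥ w(b*(v)) + b*(v)·H(b*(v)) > b*(v)·H(b*(v)), where b*(v) maximizes (v−b)H(b) (so it satisfies the first-order condition h(b*)(v − b*) = H(b*)) and T*(v) satisfies H(v)(v − T*(v)) = ∫_0^v H(z)dz. In particular, the auctioneer's revenue from the tCPA format, T*(v)H(v), strictly exceeds the revenue from the mCPA format, b*(v)H(b*(v)). -/
/-! Integrating by parts, `T*(v) H(v) = v H(v) - ∫₀ᵛ H = w(v)`. Split `w(v) = w(b*) + ∫_{b*}^v z h(z) dz`;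
since `z h(z)` is nondecreasing, the last integral is at least `b* h(b*) (v - b*)`, which is `b* H(b*)` by the
first-order condition. Finally `w(b*) > 0` because `z h(z) > 0` on `(0, b*)`. -/

open Set intervalIntegral MeasureTheory

theorem convexOn_integral_of_monotoneOn {g : ℝ → ℝ} {s : Set ℝ} (a : ℝ) (hs : Convex ℝ s)
    (hg : Continuous g) (hmono : MonotoneOn g s) :
    ConvexOn ℝ s (fun t => ∫ z in a..t, g z) := by
  have hderiv (t : ℝ) : HasDerivAt (fun t => ∫ z in a..t, g z) (g t) t :=
    hg.integral_hasStrictDerivAt a t |>.hasDerivAt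
  refine MonotoneOn.convexOn_of_deriv hs (fun t _ => (hderiv t).continuousAt.continuousWithinAt)
    (fun t _ => (hderiv t).differentiableAt.differentiableWithinAt) ?_
  rw [funext fun t => (hderiv t).deriv]
  exact hmono.mono interior_subset

theorem integral_mul_deriv_eq_sub_integral {H : ℝ → ℝ} {a b : ℝ} (hd : Differentiable ℝ H)
    (hint : IntervalIntegrable (deriv H) volume a b) :
    ∫ z in a..b, z * deriv H z = b * H b - a * H a - ∫ z in a..b, H z := by
  simpa only [one_mul, id_eq] using integral_mul_deriv_eq_deriv_mul (u' := fun _ => 1)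
    (fun x _ => hasDerivAt_id x) (fun x _ => (hd x).hasDerivAt) intervalIntegrable_const hint

theorem sub_mul_le_integral_of_monotoneOn {g : ℝ → ℝ} {a b : ℝ} (hab : a ≤ b)
    (hmono : MonotoneOn g (Icc a b)) (hint : IntervalIntegrable g volume a b) :
    (b - a) * g a ≤ ∫ z in a..b, g z := by
  calc (b - a) * g a = ∫ _ in a..b, g a := by simp
    _ ≤ ∫ z in a..b, g z := integral_mono_on hab intervalIntegrable_const hint
        fun z hz => hmono (left_mem_Icc.mpr hab) hz hz.1

theorem stmt5_general (H : ℝ → ℝ) (v bstar Tstar : ℝ)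
    (hC1 : ContDiff ℝ 1 H)
    (hpos : ∀ z, 0 ≤ z → 0 < deriv H z)
    (hassump2 : MonotoneOn (fun z => z * deriv H z) (Ici 0))
    (hb : 0 < bstar) (hbv : bstar < v)
    (hFOC : deriv H bstar * (v - bstar) = H bstar)
    (hT : H v * (v - Tstar) = ∫ z in (0:ℝ)..v, H z) :
    ConvexOn ℝ (Ici 0) (fun t => ∫ z in (0:ℝ)..t, z * deriv H z) ∧
    (∫ z in (0:ℝ)..bstar, z * deriv H z) + bstar * H bstar ≤ Tstar * H v ∧
    bstar * H bstar < (∫ z in (0:ℝ)..bstar, z * deriv H z) + bstar * H bstar ∧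
    bstar * H bstar < Tstar * H v := by
  have hg : Continuous (fun z => z * deriv H z) := continuous_id.mul hC1.continuous_deriv_one
  have hrevenue : Tstar * H v = ∫ z in (0:ℝ)..v, z * deriv H z := by
    rw [integral_mul_deriv_eq_sub_integral (hC1.differentiable one_ne_zero)
      (hC1.continuous_deriv_one.intervalIntegrable 0 v)]
    linear_combination -hT
  have hsplit := integral_add_adjacent_intervals (μ := volume) (hg.intervalIntegrable 0 bstar)
    (hg.intervalIntegrable bstar v)
  have htail : bstar * H bstar ≤ ∫ z in bstar..v, z * deriv H z := by
    have := sub_mul_le_integral_of_monotoneOn hbv.le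
      (hassump2.mono fun z hz => hb.le.trans hz.1) (hg.intervalIntegrable bstar v)
    linear_combination this - bstar * hFOC
  have hwpos : 0 < ∫ z in (0:ℝ)..bstar, z * deriv H z :=
    intervalIntegral_pos_of_pos_on (hg.intervalIntegrable 0 bstar)
      (fun z hz => mul_pos hz.1 (hpos z hz.1.le)) hb
  exact ⟨convexOn_integral_of_monotoneOn 0 (convex_Ici 0) hg hassump2,
    by linarith, by linarith, by linarith⟩

theorem stmt5 (H : ℝ → ℝ) (v bstar Tstar : ℝ)
    (hC1 : ContDiff ℝ 1 H) (hmono : StrictMonoOn H (Ici 0)) (hH0 : H 0 = 0)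
    (hpos : ∀ z, 0 ≤ z → 0 < deriv H z)
    (hassump2 : MonotoneOn (fun z => z * deriv H z) (Ici 0))
    (hv : 0 < v) (hb : 0 < bstar) (hbv : bstar < v)
    (hFOC : deriv H bstar * (v - bstar) = H bstar)
    (hT : H v * (v - Tstar) = ∫ z in (0:ℝ)..v, H z) :
    ConvexOn ℝ (Ici 0) (fun t => ∫ z in (0:ℝ)..t, z * deriv H z) ∧
    (∫ z in (0:ℝ)..bstar, z * deriv H z) + bstar * H bstar ≤ Tstar * H v ∧
    bstar * H bstar < (∫ z in (0:ℝ)..bstar, z * deriv H z) + bstar * H bstar ∧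
    bstar * H bstar < Tstar * H v :=
  stmt5_general H v bstar Tstar hC1 hpos hassump2 hb hbv hFOC hT
end

section
/- For every γ > 0 there exists a positive integer n such that with F uniform on [0,1] and H(p) = p^n, the tCPA no-commitment revenue E_v[T*(v)H(v)] exceeds γ times the mCPA no-commitment revenue E_v[b*(v)H(b*(v))]. -/
open Set intervalIntegral

/-- Revenue `E_v[T*(v) H(v)]` of tCPA for `v ~ U[0,1]`, `H(p) = p ^ n`, `T*(v) = n v / (n + 1)`. -/
noncomputable def tcpaRevenue (n : ℕ) : ℝ :=
  ∫ v in (0:ℝ)..1, ((n : ℝ) * v / (n + 1)) * v ^ n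

/-- Revenue `E_v[b*(v) H(b*(v))]` of mCPA for `v ~ U[0,1]`, `H(p) = p ^ n`, `b*(v) = v / (n + 1)`. -/
noncomputable def mcpaRevenue (n : ℕ) : ℝ :=
  ∫ v in (0:ℝ)..1, (v / (n + 1)) * (v / (n + 1)) ^ n

theorem tcpaRevenue_eq (n : ℕ) : tcpaRevenue n = n / ((n + 1) * (n + 2)) := by
  have hintegrand (v : ℝ) : (n * v / (n + 1)) * v ^ n = (n / (n + 1)) * v ^ (n + 1) := by ring
  simp_rw [tcpaRevenue, hintegrand, integral_const_mul, integral_pow]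
  push_cast
  field_simp
  ring

theorem mcpaRevenue_eq (n : ℕ) : mcpaRevenue n = 1 / ((n + 1) ^ (n + 1) * (n + 2)) := by
  have hintegrand (v : ℝ) :
      (v / (n + 1)) * (v / (n + 1)) ^ n = (((n : ℝ) + 1) ^ (n + 1))⁻¹ * v ^ (n + 1) := by
    rw [← pow_succ', div_pow, div_eq_inv_mul]
  simp_rw [mcpaRevenue, hintegrand, integral_const_mul, integral_pow]
  push_cast
  field_simp
  ring

theorem mcpaRevenue_pos (n : ℕ) : 0 < mcpaRevenue n := by
  rw [mcpaRevenue_eq]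
  positivity

theorem tcpaRevenue_eq_mul_mcpaRevenue (n : ℕ) :
    tcpaRevenue n = n * (n + 1) ^ n * mcpaRevenue n := by
  rw [tcpaRevenue_eq, mcpaRevenue_eq]
  field_simp
  ring

theorem stmt7 : ∀ γ : ℝ, 0 < γ → ∃ n : ℕ, 0 < n ∧
    (∫ v in (0:ℝ)..1, ((n : ℝ) * v / (n + 1)) * v ^ n) >
      γ * ∫ v in (0:ℝ)..1, (v / (n + 1)) * (v / (n + 1)) ^ n := by
  intro γ hγ
  obtain ⟨n, hγn⟩ := exists_nat_gt γ
  refine ⟨n, by exact_mod_cast hγ.trans hγn, ?_⟩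
  change γ * mcpaRevenue n < tcpaRevenue n
  rw [tcpaRevenue_eq_mul_mcpaRevenue]
  gcongr
  · exact mcpaRevenue_pos n
  calc γ < n := hγn
    _ ≤ n * (n + 1) ^ n := le_mul_of_one_le_right n.cast_nonneg (one_le_pow₀ (by linarith))
end

section
/- Let Ĥ(p) = 1 − 1/p for p ≥ 1 (and 0 for p < 1), and consider a bidder with value v ≥ 1. Then the no-commitment tCPA revenue is π*(tCPA|v) = log(v), the optimal mCPA bid is b*(v) = √v with revenue π*(mCPA|v) = √v − 1, and π*(mCPA|v) > π*(tCPA|v) for all sufficiently large v; moreover (√v − 1)/log(v) → ∞ as v → ∞, so for every γ > 0 there is a value distribution supported on large enough values for which mCPA revenue exceeds γ times tCPA revenue. -/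
open Set intervalIntegral

noncomputable def Hhat (p : ℝ) : ℝ := if 1 ≤ p then 1 - 1 / p else 0

lemma Hhat_int (v : ℝ) (hv : 1 ≤ v) :
    (∫ z in (0:ℝ)..v, Hhat z) = v - 1 - Real.log v := by
  have h0 : (0:ℝ) ≤ 1 := zero_le_one
  have h1 : (∫ z in (0:ℝ)..1, Hhat z) = 0 := by
    rw [intervalIntegral.integral_congr (g := fun _ => (0:ℝ))]
    · simp
    · intro z hz
      rw [uIcc_of_le h0] at hz
      rcases lt_or_eq_of_le hz.2 with h | h
      · simp [Hhat, not_le.mpr h]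
      · simp [Hhat, h]
  have hEq : EqOn Hhat (fun z => 1 - 1/z) (uIcc 1 v) := by
    intro z hz
    rw [uIcc_of_le hv] at hz
    simp [Hhat, hz.1]
  have hne : ∀ x ∈ uIcc (1:ℝ) v, x ≠ 0 := by
    intro x hx
    rw [uIcc_of_le hv] at hx
    linarith [hx.1]
  have h2 : (∫ z in (1:ℝ)..v, Hhat z) = v - 1 - Real.log v := by
    rw [intervalIntegral.integral_congr hEq]
    rw [intervalIntegral.integral_sub intervalIntegrable_const
      (intervalIntegrable_one_div hne continuousOn_id)]
    rw [integral_one_div (by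
      intro h; exact hne 0 h rfl)]
    simp
  have hi1 : IntervalIntegrable Hhat MeasureTheory.volume 0 1 := by
    apply IntervalIntegrable.congr_ae (f := fun _ => (0:ℝ))
    · exact intervalIntegrable_const
    · apply (MeasureTheory.ae_restrict_iff' measurableSet_uIoc).2
      apply Filter.Eventually.of_forall
      intro z hz
      rw [uIoc_of_le h0] at hz
      rcases lt_or_eq_of_le hz.2 with h | h
      · simp [Hhat, not_le.mpr h]
      · simp [Hhat, h]
  have hi2 : IntervalIntegrable Hhat MeasureTheory.volume 1 v := by
    apply IntervalIntegrable.congr_ae (f := fun z => 1 - 1/z)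
    · exact intervalIntegrable_const.sub
        (intervalIntegrable_one_div hne continuousOn_id)
    · apply (MeasureTheory.ae_restrict_iff' measurableSet_uIoc).2
      apply Filter.Eventually.of_forall
      intro z hz
      exact (hEq (uIoc_subset_uIcc hz)).symm
  rw [← intervalIntegral.integral_add_adjacent_intervals hi1 hi2, h1, h2]
  ring

lemma tend_aux : Filter.Tendsto (fun w => (Real.sqrt w - 1) / Real.log w)
    Filter.atTop Filter.atTop := by
  have hlo : Real.log =o[Filter.atTop] fun x : ℝ => x ^ ((1:ℝ)/2) :=
    isLittleO_log_rpow_atTop (by norm_num)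
  have h0 : Filter.Tendsto (fun x => Real.log x / Real.sqrt x) Filter.atTop (nhds 0) := by
    refine hlo.tendsto_div_nhds_zero.congr fun x => ?_
    rw [Real.sqrt_eq_rpow]
  have hpos : ∀ᶠ x : ℝ in Filter.atTop, Real.log x / Real.sqrt x ∈ Set.Ioi (0:ℝ) := by
    filter_upwards [Filter.eventually_ge_atTop (2:ℝ)] with x hx
    have h1 : (0:ℝ) < Real.log x := Real.log_pos (by linarith)
    have h2 : (0:ℝ) < Real.sqrt x := Real.sqrt_pos.2 (by linarith)
    exact div_pos h1 h2
  have h0' : Filter.Tendsto (fun x => Real.log x / Real.sqrt x) Filter.atTop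
      (nhdsWithin 0 (Set.Ioi 0)) :=
    tendsto_nhdsWithin_of_tendsto_nhds_of_eventually_within _ h0 hpos
  have hinv : Filter.Tendsto (fun x => Real.sqrt x / Real.log x) Filter.atTop
      Filter.atTop := by
    have := h0'.inv_tendsto_nhdsGT_zero
    refine this.congr fun x => ?_
    simp [Pi.inv_apply, inv_div]
  have hge : ∀ᶠ x : ℝ in Filter.atTop, (-1:ℝ) ≤ -1 / Real.log x := by
    filter_upwards [Filter.eventually_ge_atTop (3:ℝ)] with x hx
    have h1 : (1:ℝ) ≤ Real.log x := by
      have : Real.exp 1 ≤ x := le_trans (by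
        have := Real.exp_one_lt_d9
        linarith) hx
      calc (1:ℝ) = Real.log (Real.exp 1) := (Real.log_exp 1).symm
        _ ≤ Real.log x := Real.log_le_log (Real.exp_pos 1) this
    have h2 : -1 / Real.log x = -(1 / Real.log x) := by ring
    rw [h2]
    have : 1 / Real.log x ≤ 1 := by
      rw [div_le_one (by linarith)]; exact h1
    linarith
  have := Filter.tendsto_atTop_add_right_of_le' Filter.atTop (-1:ℝ) hinv hge
  refine this.congr fun x => ?_
  ring

theorem stmt8 (v : ℝ) (hv : 1 ≤ v) :
    (∀ T : ℝ, Hhat v * (v - T) = (∫ z in (0:ℝ)..v, Hhat z) → T * Hhat v = Real.log v) ∧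
    IsMaxOn (fun b => (v - b) * Hhat b) (Ici 1) (Real.sqrt v) ∧
    Real.sqrt v * Hhat (Real.sqrt v) = Real.sqrt v - 1 ∧
    (∃ v₁ : ℝ, ∀ w : ℝ, v₁ ≤ w → Real.log w < Real.sqrt w - 1) ∧
    Filter.Tendsto (fun w => (Real.sqrt w - 1) / Real.log w) Filter.atTop Filter.atTop ∧
    ∀ γ : ℝ, 0 < γ → ∃ v₀ : ℝ, 1 < v₀ ∧ ∀ w : ℝ, v₀ ≤ w →
      Real.sqrt w - 1 > γ * Real.log w := by
  have hv0 : (0:ℝ) < v := lt_of_lt_of_le one_pos hv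
  have hs1 : (1:ℝ) ≤ Real.sqrt v := by
    rw [show (1:ℝ) = Real.sqrt 1 from (Real.sqrt_one).symm]
    exact Real.sqrt_le_sqrt hv
  have hs0 : (0:ℝ) < Real.sqrt v := lt_of_lt_of_le one_pos hs1
  have hss : Real.sqrt v * Real.sqrt v = v := Real.mul_self_sqrt hv0.le
  have hHv : Hhat v = 1 - 1/v := by simp [Hhat, hv]
  have hlast : ∀ γ : ℝ, 0 < γ → ∃ v₀ : ℝ, 1 < v₀ ∧ ∀ w : ℝ, v₀ ≤ w →
      Real.sqrt w - 1 > γ * Real.log w := by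
    intro γ hγ
    obtain ⟨N, hN⟩ := (tend_aux.eventually_gt_atTop γ).exists_forall_of_atTop
    refine ⟨max N 2, lt_of_lt_of_le one_lt_two (le_max_right _ _), fun w hw => ?_⟩
    have hw2 : (2:ℝ) ≤ w := le_trans (le_max_right _ _) hw
    have hlog : (0:ℝ) < Real.log w := Real.log_pos (by linarith)
    have := hN w (le_trans (le_max_left _ _) hw)
    calc γ * Real.log w < ((Real.sqrt w - 1) / Real.log w) * Real.log w := by
          exact mul_lt_mul_of_pos_right this hlog
      _ = Real.sqrt w - 1 := div_mul_cancel₀ _ hlog.ne'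
  refine ⟨?_, ?_, ?_, ?_, tend_aux, hlast⟩
  · intro T hT
    rw [Hhat_int v hv] at hT
    have hvv : Hhat v * v = v - 1 := by
      rw [hHv]; field_simp
    have : Hhat v * v - Hhat v * T = v - 1 - Real.log v := by
      rw [← mul_sub]; exact hT
    rw [hvv] at this
    linarith [this]
  · rw [isMaxOn_iff]
    intro b hb
    have hb1 : (1:ℝ) ≤ b := hb
    have hb0 : (0:ℝ) < b := lt_of_lt_of_le one_pos hb1
    have h1 : (v - b) * Hhat b = (v - b) * (b - 1) / b := by
      simp only [Hhat, if_pos hb1]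
      field_simp
    have h2 : (v - Real.sqrt v) * Hhat (Real.sqrt v) = (Real.sqrt v - 1)^2 := by
      simp only [Hhat, if_pos hs1]
      field_simp
      nlinarith [hss]
    simp only [h1, h2]
    rw [div_le_iff₀ hb0]
    nlinarith [sq_nonneg (b - Real.sqrt v), hss, hs0]
  · simp only [Hhat, if_pos hs1]
    field_simp
  · obtain ⟨v₀, _, h⟩ := hlast 1 one_pos
    exact ⟨v₀, fun w hw => by have := h w hw; linarith⟩
end

section
/- Let F have support [v̲, v̄] with v̲ ≥ 0, and let ψ = π_{v̲-SPA}/π_MYE where π_{v̲-SPA} = E_v[φ_F(v)] is the revenue of a second-price auction with reserve v̲ for a single item and π_MYE = E_v[1{v ≥ r_MYE}·φ_F(v)] is Myerson's optimal single-item revenue, with r_MYE = φ_F^{-1}(0). Then for every price landscape H (strictly increasing, positive, H(0)=0): π*_NC ≥ ψ · π*_C, where π*_NC = ∫_0^{v̲}H + E_v[φ_F(v)H(v)] and π*_C = E_v[1{v ≥ r_MYE}·φ_F(v)·H(v)]. -/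
/-! Because `φ` is increasing and vanishes at `r_MYE`, while `H` is increasing, every
value satisfies `φ v * H v ≥ H r_MYE * φ v`. Integrated against `f` above `r_MYE` this gives
`H r_MYE ≤ π*_C / π_MYE`; below `r_MYE`, where `∫ φ f ≤ 0`, it then bounds the contribution to
`π*_NC` from below by `(π*_C / π_MYE) * ∫_{v < r_MYE} φ f`. Adding the contribution above
`r_MYE` and `∫_0^{v̲} H ≥ 0` yields `π*_NC ≥ ψ π*_C`. -/

open MeasureTheory

open Set intervalIntegral

theorem integral_div_setIntegral_mul_le_integral_mul {α : Type*} [MeasurableSpace α]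
    {μ : Measure α} {g h : α → ℝ} {s : Set α} {c : ℝ} (hs : MeasurableSet s)
    (hg : Integrable g μ) (hgh : Integrable (fun x => g x * h x) μ)
    (hcross : ∀ᵐ x ∂μ, c * g x ≤ g x * h x) (hneg : ∀ᵐ x ∂μ, x ∈ sᶜ → g x ≤ 0)
    (hpos : 0 < ∫ x in s, g x ∂μ) :
    ((∫ x, g x ∂μ) / ∫ x in s, g x ∂μ) * ∫ x in s, g x * h x ∂μ ≤ ∫ x, g x * h x ∂μ := by
  have hcross_on (t : Set α) : c * ∫ x in t, g x ∂μ ≤ ∫ x in t, g x * h x ∂μ := by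
    rw [← MeasureTheory.integral_const_mul]
    exact setIntegral_mono_ae (hg.integrableOn.const_mul c) hgh.integrableOn hcross
  have hcompl : ∫ x in sᶜ, g x ∂μ ≤ 0 := setIntegral_nonpos_ae hs.compl hneg
  rw [← integral_add_compl hs hg, ← integral_add_compl hs hgh, div_mul_eq_mul_div,
    div_le_iff₀ hpos]
  nlinarith [mul_le_mul_of_nonpos_left (hcross_on s) hcompl,
    mul_le_mul_of_nonneg_right (hcross_on sᶜ) hpos.le]

theorem MonotoneOn.mul_le_mul_apply_of_apply_eq_zero {φ H : ℝ → ℝ} {S : Set ℝ} {r v : ℝ}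
    (hφ : MonotoneOn φ S) (hH : MonotoneOn H S) (hr : r ∈ S) (hr0 : φ r = 0) (hv : v ∈ S) :
    H r * φ v ≤ φ v * H v := by
  rcases le_total v r with hvr | hrv
  · have := hφ hv hr hvr
    nlinarith [hH hv hr hvr]
  · have := hφ hr hv hrv
    nlinarith [hH hr hv hrv]

noncomputable def virtualValue (f : ℝ → ℝ) (a v : ℝ) : ℝ :=
  v - (1 - ∫ z in a..v, f z) / f v

theorem continuousOn_virtualValue {f : ℝ → ℝ} {a b : ℝ} (hf : Continuous f)
    (hfpos : ∀ v ∈ Icc a b, 0 < f v) : ContinuousOn (virtualValue f a) (Icc a b) := by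
  have hF : Continuous fun v => ∫ z in a..v, f z :=
    continuous_primitive (fun _ _ => hf.intervalIntegrable _ _) a
  exact continuousOn_id.sub <| (continuous_const.sub hF).continuousOn.div hf.continuousOn
    fun v hv => (hfpos v hv).ne'

theorem stmt11_general (H f : ℝ → ℝ) (vlow vhigh rM : ℝ)
    (hv0 : 0 ≤ vlow)
    (hHmono : Monotone H)
    (hHnonneg : ∀ z, 0 ≤ H z)
    (hfcont : Continuous f) (hfpos : ∀ v ∈ Icc vlow vhigh, 0 < f v)
    (φ : ℝ → ℝ) (hφ : ∀ v, φ v = v - (1 - ∫ z in vlow..v, f z) / f v)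
    (hφmono : StrictMonoOn φ (Icc vlow vhigh))
    (hrM : φ rM = 0) (hrMmem : rM ∈ Icc vlow vhigh)
    (hMYEpos : 0 < ∫ v in vlow..vhigh, (if rM ≤ v then φ v else 0) * f v) :
    (∫ z in (0:ℝ)..vlow, H z) + (∫ v in vlow..vhigh, φ v * H v * f v) ≥
      ((∫ v in vlow..vhigh, φ v * f v) /
        (∫ v in vlow..vhigh, (if rM ≤ v then φ v else 0) * f v)) *
        (∫ v in vlow..vhigh, (if rM ≤ v then φ v * H v else 0) * f v) := by
  have hab : vlow ≤ vhigh := hrMmem.1.trans hrMmem.2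
  set g : ℝ → ℝ := fun v => φ v * f v
  have hφcont : ContinuousOn φ (Icc vlow vhigh) :=
    (funext hφ : φ = virtualValue f vlow) ▸ continuousOn_virtualValue hfcont hfpos
  have hgcont : ContinuousOn g (Icc vlow vhigh) := hφcont.mul hfcont.continuousOn
  have hg : IntegrableOn g (Ioc vlow vhigh) :=
    (hgcont.integrableOn_Icc).mono_set Ioc_subset_Icc_self
  have hgH : IntegrableOn (fun v => g v * H v) (Ioc vlow vhigh) :=
    (((hHmono.monotoneOn _).integrableOn_isCompact isCompact_Icc).continuousOn_mul hgcont
      isCompact_Icc).mono_set Ioc_subset_Icc_self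
  have hcross : ∀ᵐ v ∂volume.restrict (Ioc vlow vhigh), H rM * g v ≤ g v * H v := by
    refine ae_restrict_of_forall_mem measurableSet_Ioc fun v hv => ?_
    have hv' := Ioc_subset_Icc_self hv
    nlinarith [hφmono.monotoneOn.mul_le_mul_apply_of_apply_eq_zero (hHmono.monotoneOn _)
      hrMmem hrM hv', hfpos v hv']
  have hneg : ∀ᵐ v ∂volume.restrict (Ioc vlow vhigh), v ∈ (Ici rM)ᶜ → g v ≤ 0 := by
    refine ae_restrict_of_forall_mem measurableSet_Ioc fun v hv hvr => ?_
    have hv' := Ioc_subset_Icc_self hv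
    have : φ v ≤ 0 := hrM ▸ hφmono.monotoneOn hv' hrMmem (le_of_lt (not_le.mp hvr))
    exact mul_nonpos_of_nonpos_of_nonneg this (hfpos v hv').le
  have hite (k : ℝ → ℝ) :
      (fun v => (if rM ≤ v then k v else 0) * f v) = (Ici rM).indicator fun v => k v * f v := by
    ext v; by_cases h : rM ≤ v <;> simp [h]
  have hI0 : 0 ≤ ∫ z in (0:ℝ)..vlow, H z := integral_nonneg hv0 fun z _ => hHnonneg z
  have hkey :=
    integral_div_setIntegral_mul_le_integral_mul measurableSet_Ici hg hgH hcross hneg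
  simp only [integral_of_le hab, hite, MeasureTheory.integral_indicator measurableSet_Ici]
    at hMYEpos ⊢
  simp only [mul_right_comm _ (H _) (f _)]
  linarith [hkey hMYEpos]

theorem stmt11 (H f : ℝ → ℝ) (vlow vhigh rM : ℝ)
    (hv0 : 0 ≤ vlow) (hvv : vlow < vhigh)
    (hHcont : Continuous H) (hHmono : Monotone H) (hH0 : H 0 = 0)
    (hHnonneg : ∀ z, 0 ≤ H z) (hHpos : ∀ z, 0 < z → 0 < H z)
    (hfcont : Continuous f) (hfpos : ∀ v ∈ Icc vlow vhigh, 0 < f v)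
    (hfone : (∫ v in vlow..vhigh, f v) = 1)
    (φ : ℝ → ℝ) (hφ : ∀ v, φ v = v - (1 - ∫ z in vlow..v, f z) / f v)
    (hφmono : StrictMonoOn φ (Icc vlow vhigh))
    (hrM : φ rM = 0) (hrMmem : rM ∈ Icc vlow vhigh)
    (hMYEpos : 0 < ∫ v in vlow..vhigh, (if rM ≤ v then φ v else 0) * f v) :
    (∫ z in (0:ℝ)..vlow, H z) + (∫ v in vlow..vhigh, φ v * H v * f v) ≥
      ((∫ v in vlow..vhigh, φ v * f v) /
        (∫ v in vlow..vhigh, (if rM ≤ v then φ v else 0) * f v)) *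
        (∫ v in vlow..vhigh, (if rM ≤ v then φ v * H v else 0) * f v) :=
  stmt11_general H f vlow vhigh rM hv0 hHmono hHnonneg hfcont hfpos φ hφ hφmono hrM hrMmem hMYEpos
end

section
/- No-Swapping Lemma: Consider an auction over queries X where agent i bids b_i and has conversion rate q_i(x) > 0 on query x, and the winner of query x is the agent maximizing b_i·q_i(x). Given two bid profiles b and b', build a directed graph G on the agents with an edge (i,j) whenever there exists a query x won by i under profile b and won by j under profile b'. Then G contains no directed cycle. -/
/-! Comparing the two bid profiles on a single query `x` won by `i` under `b` and by `j`
under `b'` eliminates the conversion rates: multiplying `b j q_j(x) < b i q_i(x)` by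
`b' i q_i(x) < b' j q_j(x)` and cancelling `q_i(x) q_j(x)` gives `b' i / b i < b' j / b j`.
So the bid ratio `b' / b` strictly increases along every edge of the graph, which rules
out cycles. -/

lemma div_lt_div_of_swap {b₁ b₂ b₁' b₂' s₁ s₂ : ℝ} (hs₁ : 0 < s₁) (hs₂ : 0 < s₂)
    (hb₁ : 0 < b₁) (hb₂ : 0 < b₂) (hb₁' : 0 ≤ b₁')
    (h : b₂ * s₂ < b₁ * s₁) (h' : b₁' * s₁ < b₂' * s₂) :
    b₁' / b₁ < b₂' / b₂ := by
  rw [div_lt_div_iff₀ hb₁ hb₂]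
  have key : b₁' * b₂ * (s₁ * s₂) < b₂' * b₁ * (s₁ * s₂) :=
    calc b₁' * b₂ * (s₁ * s₂) = b₁' * s₁ * (b₂ * s₂) := by ring
      _ < b₂' * s₂ * (b₁ * s₁) := mul_lt_mul'' h' h (by positivity) (by positivity)
      _ = b₂' * b₁ * (s₁ * s₂) := by ring
  exact lt_of_mul_lt_mul_right key (mul_pos hs₁ hs₂).le

theorem stmt13 {ι X : Type*} (q : ι → X → ℝ) (b b' : ι → ℝ)
    (hq : ∀ i x, 0 < q i x) (hb : ∀ i, 0 < b i) (hb' : ∀ i, 0 < b' i) :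
    ¬ ∃ (k : ℕ) (c : ℕ → ι), 0 < k ∧ c k = c 0 ∧
        (∀ i < k, c i ≠ c (i + 1)) ∧
        ∀ i < k, ∃ x : X,
          (∀ j, j ≠ c i → b j * q j x < b (c i) * q (c i) x) ∧
          (∀ j, j ≠ c (i + 1) → b' j * q j x < b' (c (i + 1)) * q (c (i + 1)) x) := by
  rintro ⟨k, c, hk, hcycle, hne, hwin⟩
  have hstep : ∀ i < k, b' (c i) / b (c i) < b' (c (i + 1)) / b (c (i + 1)) := by
    intro i hi
    obtain ⟨x, hx, hx'⟩ := hwin i hi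
    exact div_lt_div_of_swap (hq _ x) (hq _ x) (hb _) (hb _) (hb' _).le
      (hx _ (hne i hi).symm) (hx' _ (hne i hi))
  have hmono := strictMonoOn_Iic_of_lt_succ (ψ := fun i ↦ b' (c i) / b (c i)) hstep
  have hround := hmono (Set.mem_Iic.2 (Nat.zero_le k)) (Set.mem_Iic.2 le_rfl) hk
  simp only [hcycle, lt_irrefl] at hround
end
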